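/- arXiv:1402.6130 — 4 statements merged into one kernel-verified Lean document; each statement's English description precedes it below -/
import Mathlib

section
/- Let K be a non-archimedean real closed field and G ⊆ K a value group section of K with respect to the natural valuation. Then (i) G is unbounded above in K: for each x ∈ K there is y ∈ G with y > x; and (ii) G is discrete in K: for each y ∈ G there is ε > 0 in K with (y − ε, y + ε) ∩ G = {y}. -/
/-!
Both parts come from the fact that `G` meets each archimedean class only once.
(i) For an infinite `ω` and `x ≥ 1`, the element of `G` equivalent to `ω * x` exceeds `x`.
(ii) Everything in `(y/2, 3y/2)` is archimedean equivalent to `y`, so `y` is the only element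
of `G` there.
-/

open FirstOrder Language FirstOrder.Ring

/-- A linearly ordered field is real closed. -/
def IsRealClosedField (K : Type*) [Field K] [LinearOrder K] [IsStrictOrderedRing K] : Prop :=
  (∀ x : K, 0 ≤ x → ∃ y : K, y ^ 2 = x) ∧
    ∀ p : Polynomial K, Odd p.natDegree → ∃ x : K, p.eval x = 0

/-- Relative algebraic closure of ℚ(a) in K. -/
def RC (K : Type*) [Field K] (a : Set K) : Set K :=
  {x : K | IsAlgebraic (Subfield.closure a) x}

/-- The language of ordered rings. -/
def ORLang : Language := Language.ring.sum Language.order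

noncomputable instance ORLang.structure (K : Type*) [Field K] [LinearOrder K] [IsStrictOrderedRing K] :
    ORLang.Structure K :=
  letI : Language.ring.Structure K := (compatibleRingOfRing K).toStructure
  letI : Language.order.Structure K := orderStructure K
  Language.sumStructure _ _ K

/-- Two tuples realize the same first-order type in the language of ordered rings. -/
def SameType {K : Type*} [Field K] [LinearOrder K] [IsStrictOrderedRing K] {n : ℕ} (v w : Fin n → K) : Prop :=
  ∀ φ : ORLang.Formula (Fin n), φ.Realize v ↔ φ.Realize w

/-- `I` is an integer part of `K`. -/
structure IsIntegerPart (K : Type*) [Field K] [LinearOrder K] [IsStrictOrderedRing K] (I : Subring K) : Prop where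
  one_le_of_pos : ∀ i ∈ I, 0 < i → 1 ≤ i
  round : ∀ x : K, ∃ i ∈ I, i ≤ x ∧ x < i + 1

/-- Positive elements `x`, `y` are archimedean equivalent. -/
def ArchEquiv (K : Type*) [Field K] [LinearOrder K] [IsStrictOrderedRing K] (x y : K) : Prop :=
  ∃ n : ℕ, x < n * y ∧ y < n * x

/-- `G` is a value group section of `K` (with respect to the natural valuation):
the image of a group embedding of the value group into `(K^{>0}, ·)`, i.e. a subgroup of the
positive multiplicative group meeting each archimedean equivalence class exactly once. -/
structure IsValueGroupSection (K : Type*) [Field K] [LinearOrder K] [IsStrictOrderedRing K] (G : Set K) : Prop where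
  pos : ∀ g ∈ G, 0 < g
  one_mem : (1 : K) ∈ G
  mul_mem : ∀ g ∈ G, ∀ h ∈ G, g * h ∈ G
  inv_mem : ∀ g ∈ G, g⁻¹ ∈ G
  existsUnique : ∀ x : K, 0 < x → ∃! g : K, g ∈ G ∧ ArchEquiv K x g

section ArchEquiv

variable {K : Type*} [Field K] [LinearOrder K] [IsStrictOrderedRing K]

theorem ArchEquiv.refl {x : K} (hx : 0 < x) : ArchEquiv K x x :=
  ⟨2, by push_cast; linarith, by push_cast; linarith⟩

theorem archEquiv_of_mem_Ioo {y z : K} (hy : 0 < y) (hz : z ∈ Set.Ioo (y - y / 2) (y + y / 2)) :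
    ArchEquiv K y z :=
  ⟨2, by push_cast; linarith [hz.1], by push_cast; linarith [hz.2]⟩

theorem ArchEquiv.lt_of_mul_lt {ω x g : K} (hx : 0 < x) (hω : ∀ n : ℕ, (n : K) < ω)
    (h : ArchEquiv K (ω * x) g) : x < g := by
  obtain ⟨n, hlt, -⟩ := h
  have hnx : (n : K) * x < n * g :=
    (mul_lt_mul_of_pos_right (hω n) hx).trans hlt
  exact lt_of_mul_lt_mul_left hnx n.cast_nonneg

end ArchEquiv

namespace IsValueGroupSection

variable {K : Type*} [Field K] [LinearOrder K] [IsStrictOrderedRing K] {G : Set K}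

theorem eq_of_archEquiv (hG : IsValueGroupSection K G) {x g h : K} (hx : 0 < x)
    (hg : g ∈ G) (hh : h ∈ G) (hxg : ArchEquiv K x g) (hxh : ArchEquiv K x h) : g = h :=
  (hG.existsUnique x hx).unique ⟨hg, hxg⟩ ⟨hh, hxh⟩

theorem exists_mem_gt (hG : IsValueGroupSection K G) {ω : K} (hω : ∀ n : ℕ, (n : K) < ω)
    (x : K) : ∃ g ∈ G, x < g := by
  have hω0 : 0 < ω := by simpa using hω 0
  have hx₁ : (0 : K) < max x 1 := lt_max_of_lt_right one_pos
  obtain ⟨g, ⟨hgG, hxg⟩, -⟩ := hG.existsUnique (ω * max x 1) (mul_pos hω0 hx₁)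
  exact ⟨g, hgG, (le_max_left x 1).trans_lt (hxg.lt_of_mul_lt hx₁ hω)⟩

theorem eq_of_mem_Ioo (hG : IsValueGroupSection K G) {y z : K} (hy : y ∈ G) (hz : z ∈ G)
    (hyz : z ∈ Set.Ioo (y - y / 2) (y + y / 2)) : z = y := by
  have hy0 := hG.pos y hy
  exact hG.eq_of_archEquiv hy0 hz hy (archEquiv_of_mem_Ioo hy0 hyz) (ArchEquiv.refl hy0)

end IsValueGroupSection

theorem stmt_5_general {K : Type*} [Field K] [LinearOrder K] [IsStrictOrderedRing K]
    (hnonarch : ∃ x : K, ∀ n : ℕ, (n : K) < x)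
    (G : Set K) (hG : IsValueGroupSection K G) :
    (∀ x : K, ∃ y ∈ G, x < y) ∧
      (∀ y ∈ G, ∃ ε : K, 0 < ε ∧ ∀ z ∈ G, y - ε < z → z < y + ε → z = y) := by
  obtain ⟨ω, hω⟩ := hnonarch
  exact ⟨hG.exists_mem_gt hω, fun y hy =>
    ⟨y / 2, half_pos (hG.pos y hy), fun z hz h₁ h₂ => hG.eq_of_mem_Ioo hy hz ⟨h₁, h₂⟩⟩⟩

theorem stmt_5 {K : Type*} [Field K] [LinearOrder K] [IsStrictOrderedRing K] (hK : IsRealClosedField K)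
    (hnonarch : ∃ x : K, ∀ n : ℕ, (n : K) < x)
    (G : Set K) (hG : IsValueGroupSection K G) :
    (∀ x : K, ∃ y ∈ G, x < y) ∧
      (∀ y ∈ G, ∃ ε : K, 0 < ε ∧ ∀ z ∈ G, y - ε < z → z < y + ε → z = y) :=
  stmt_5_general hnonarch G hG
end

section
/- Let K be a real closed field and K' a dense real closed subfield of K. Then every integer part of K' is also an integer part of K. -/
open FirstOrder Language FirstOrder.Ring

/-- A linearly ordered field is real closed. -/
def IsRealClosedOrd (K : Type*) [Field K] [LinearOrder K] [IsStrictOrderedRing K] : Prop :=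
  (∀ x : K, 0 ≤ x → ∃ y : K, y ^ 2 = x) ∧
    ∀ p : Polynomial K, Odd p.natDegree → ∃ x : K, p.eval x = 0

namespace IsIntegerPart

variable {K : Type*} [Field K] [LinearOrder K] [IsStrictOrderedRing K]

theorem of_exists_le_lt_add_two {I : Subring K} (one_le_of_pos : ∀ i ∈ I, 0 < i → 1 ≤ i)
    (h : ∀ x : K, ∃ i ∈ I, i ≤ x ∧ x < i + 2) : IsIntegerPart K I where
  one_le_of_pos := one_le_of_pos
  round x := by
    obtain ⟨i, hi, hix, hxi⟩ := h x
    by_cases hx : x < i + 1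
    · exact ⟨i, hi, hix, hx⟩
    · exact ⟨i + 1, I.add_mem hi I.one_mem, not_lt.1 hx, by linarith⟩

theorem one_le_of_pos_map_subtype {K' : Subfield K} {I : Subring K'} (hI : IsIntegerPart K' I) :
    ∀ i ∈ I.map K'.subtype, 0 < i → 1 ≤ i := by
  rintro _ ⟨i, hi, rfl⟩ hpos
  exact_mod_cast hI.one_le_of_pos i hi hpos

end IsIntegerPart

theorem stmt_12_general {K : Type*} [Field K] [LinearOrder K] [IsStrictOrderedRing K]
    (K' : Subfield K)
    (hdense : ∀ x y : K, x < y → ∃ z ∈ K', x < z ∧ z < y)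
    (I : Subring K') (hI : IsIntegerPart K' I) :
    IsIntegerPart K (I.map K'.subtype) := by
  refine .of_exists_le_lt_add_two hI.one_le_of_pos_map_subtype fun x => ?_
  obtain ⟨z, hz, hxz, hzx⟩ := hdense (x - 1) x (sub_one_lt x)
  obtain ⟨i, hi, hiz, hzi⟩ := hI.round ⟨z, hz⟩
  have hiz' : (i : K) ≤ z := hiz
  have hzi' : z < (i : K) + 1 := by exact_mod_cast hzi
  exact ⟨i, ⟨i, hi, rfl⟩, show (i : K) ≤ x by linarith, show x < (i : K) + 2 by linarith⟩

theorem stmt_12 {K : Type*} [Field K] [LinearOrder K] [IsStrictOrderedRing K] (hK : IsRealClosedOrd K)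
    (K' : Subfield K) (hK' : IsRealClosedOrd K')
    (hdense : ∀ x y : K, x < y → ∃ z ∈ K', x < z ∧ z < y)
    (I : Subring K') (hI : IsIntegerPart K' I) :
    IsIntegerPart K (I.map K'.subtype) :=
  stmt_12_general K' hdense I hI
end

section
/- Let M be an o-minimal, countable ω-homogeneous structure such that dcl(a) is bounded above in M for every finite a ⊆ M. Then no unbounded discrete subset X ⊆ M has a support: for every finite a ⊆ M there is an automorphism of M fixing a pointwise that does not map X onto X. -/
open FirstOrder Language

/-- The image of `x : M` in `WithBot (WithTop M)`, the order `M` extended by `±∞`. -/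
def toInf {M : Type*} (x : M) : WithBot (WithTop M) := ((x : WithTop M) : WithBot (WithTop M))

/-- `M` is o-minimal: every subset of `M` definable with parameters is a finite union of
points and open intervals with endpoints in `M ∪ {±∞}`. -/
def IsOMinimalStructure (L : Language) (M : Type*) [L.Structure M] [LinearOrder M] : Prop :=
  ∀ s : Set M, (Set.univ : Set M).Definable₁ L s →
    ∃ (P : Finset M) (Iv : Finset (WithBot (WithTop M) × WithBot (WithTop M))),
      s = ↑P ∪ ⋃ p ∈ Iv, {x : M | p.1 < toInf x ∧ toInf x < p.2}

/-- The definable closure of `A` in `M`. -/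
def dclSet (L : Language) {M : Type*} [L.Structure M] (A : Set M) : Set M :=
  {x : M | A.Definable₁ L {x}}

/-- Two tuples realize the same first-order type. -/
def SameTypeL (L : Language) {M : Type*} [L.Structure M] {n : ℕ} (v w : Fin n → M) : Prop :=
  ∀ φ : L.Formula (Fin n), φ.Realize v ↔ φ.Realize w

/-- `M` is ω-homogeneous. -/
def OmegaHom (L : Language) (M : Type*) [L.Structure M] : Prop :=
  ∀ (n : ℕ) (v w : Fin n → M), SameTypeL L v w →
    ∀ c : M, ∃ d : M, SameTypeL L (Fin.snoc v c) (Fin.snoc w d)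


/-!
Fix a tuple `a` and add to it the finitely many parameters defining the order; let `z` bound
the definable closure of the result. By o-minimality, a definable set has a bounded side (itself
or its complement), and a nonempty bounded definable set has a supremum, which is definable over
the same parameters. Hence no `a`-definable set separates two elements above `z`: all of them
have the same type over `a`. Taking `b ∈ X` above `z` and `c ∉ X` between `b` and the next point
of `X`, a back-and-forth construction (countability and ω-homogeneity) yields an automorphism
fixing `a` and sending `b` to `c`, so it does not preserve `X`.
-/

open Set

section OMinimal

theorem eq_bot_or_eq_top_or_eq_toInf {M : Type*} (q : WithBot (WithTop M)) :
    q = ⊥ ∨ q = ⊤ ∨ ∃ m : M, q = toInf m := by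
  induction q using WithBot.recBotCoe with
  | bot => exact Or.inl rfl
  | coe q =>
    induction q using WithTop.recTopCoe with
    | top => exact Or.inr (Or.inl rfl)
    | coe m => exact Or.inr (Or.inr ⟨m, rfl⟩)

variable {L : Language} {M : Type*} [L.Structure M] [LinearOrder M]

theorem toInf_strictMono : StrictMono (toInf : M → WithBot (WithTop M)) :=
  WithBot.coe_strictMono.comp WithTop.coe_strictMono

theorem toInf_lt_top (x : M) : toInf x < ⊤ :=
  WithBot.coe_lt_coe.2 (WithTop.coe_lt_top x)

theorem exists_toInf_bound [Nonempty M] (Q : Finset (WithBot (WithTop M))) :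
    ∃ t : M, ∀ q ∈ Q, q ≤ toInf t ∨ q = ⊤ := by
  obtain ⟨t, ht⟩ := (Q.finite_toSet.preimage toInf_strictMono.injective.injOn).bddAbove
  refine ⟨t, fun q hq => ?_⟩
  rcases eq_bot_or_eq_top_or_eq_toInf q with rfl | rfl | ⟨m, rfl⟩
  · exact Or.inl bot_le
  · exact Or.inr rfl
  · exact Or.inl (toInf_strictMono.le_iff_le.2 (ht hq))

theorem IsOMinimalStructure.bddAbove_or_bddAbove_compl [Nonempty M]
    (homin : IsOMinimalStructure L M) {S : Set M} (hS : (univ : Set M).Definable₁ L S) :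
    BddAbove S ∨ BddAbove Sᶜ := by
  obtain ⟨P, Iv, hPIv⟩ := homin S hS
  obtain ⟨t, ht⟩ :=
    exists_toInf_bound (P.image toInf ∪ Iv.image Prod.fst ∪ Iv.image Prod.snd)
  -- above `t` there are no points of `P` and no finite endpoints, so membership is constant there
  have hconst : ∀ x y, t < x → t < y → x ∈ S → y ∈ S := by
    rw [hPIv]
    rintro x y hx hy (hxP | hxI)
    · rcases ht (toInf x) (Finset.mem_union_left _
          (Finset.mem_union_left _ (Finset.mem_image_of_mem _ hxP))) with h | h
      · exact absurd (toInf_strictMono.le_iff_le.1 h) hx.not_ge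
      · exact absurd h (toInf_lt_top x).ne
    obtain ⟨p, hp, h1, h2⟩ := mem_iUnion₂.1 hxI
    refine Or.inr (mem_biUnion hp ⟨?_, ?_⟩)
    · rcases ht p.1 (Finset.mem_union_left _
          (Finset.mem_union_right _ (Finset.mem_image_of_mem _ hp))) with h | h
      · exact h.trans_lt (toInf_strictMono hy)
      · exact absurd (h ▸ h1) (toInf_lt_top x).not_gt
    · rcases ht p.2 (Finset.mem_union_right _ (Finset.mem_image_of_mem _ hp)) with h | h
      · exact absurd (h2.trans_le h) (toInf_strictMono hx).not_gt
      · exact h ▸ toInf_lt_top y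
  by_cases h : ∃ y, t < y ∧ y ∈ S
  · obtain ⟨y, hty, hy⟩ := h
    exact Or.inr ⟨t, fun x hx => le_of_not_gt fun htx => hx (hconst y x hty htx hy)⟩
  · exact Or.inl ⟨t, fun x hx => le_of_not_gt fun htx => h ⟨x, htx, hx⟩⟩

def HasLUBOfBddAbove (s : Set M) : Prop :=
  s.Nonempty → BddAbove s → ∃ e, IsLUB s e

theorem HasLUBOfBddAbove.union {s t : Set M} (hs : HasLUBOfBddAbove s)
    (ht : HasLUBOfBddAbove t) : HasLUBOfBddAbove (s ∪ t) := by
  intro hne hbdd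
  rcases s.eq_empty_or_nonempty with rfl | hs'
  · simpa using ht (by simpa using hne) (by simpa using hbdd)
  rcases t.eq_empty_or_nonempty with rfl | ht'
  · simpa using hs (by simpa using hne) (by simpa using hbdd)
  obtain ⟨a, ha⟩ := hs hs' (hbdd.mono subset_union_left)
  obtain ⟨b, hb⟩ := ht ht' (hbdd.mono subset_union_right)
  exact ⟨a ⊔ b, ha.union hb⟩

theorem hasLUBOfBddAbove_biUnion {ι : Type*} (I : Finset ι) {f : ι → Set M}
    (hf : ∀ i ∈ I, HasLUBOfBddAbove (f i)) : HasLUBOfBddAbove (⋃ i ∈ I, f i) := by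
  classical
  induction I using Finset.induction_on with
  | empty => simp [HasLUBOfBddAbove]
  | insert i I _ ih =>
    rw [Finset.set_biUnion_insert]
    exact (hf i (I.mem_insert_self i)).union (ih fun j hj => hf j (Finset.mem_insert_of_mem hj))

theorem hasLUBOfBddAbove_finset (P : Finset M) : HasLUBOfBddAbove (P : Set M) :=
  fun hne _ => ⟨P.max' (by simpa using hne), (P.isGreatest_max' _).isLUB⟩

theorem hasLUBOfBddAbove_toInf_Ioo [DenselyOrdered M] [NoMaxOrder M]
    (p q : WithBot (WithTop M)) :
    HasLUBOfBddAbove {x : M | p < toInf x ∧ toInf x < q} := by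
  rintro ⟨x, hpx, hxq⟩ ⟨t, ht⟩
  rcases eq_bot_or_eq_top_or_eq_toInf q with rfl | rfl | ⟨m, rfl⟩
  · exact absurd hxq not_lt_bot
  · obtain ⟨y, hy⟩ := exists_gt (max x t)
    have hyS : p < toInf y ∧ toInf y < ⊤ :=
      ⟨hpx.trans (toInf_strictMono ((le_max_left x t).trans_lt hy)), toInf_lt_top y⟩
    exact absurd (ht hyS) ((le_max_right x t).trans_lt hy).not_ge
  · refine ⟨m, fun y hy => (toInf_strictMono.lt_iff_lt.1 hy.2).le,
      fun u hu => le_of_not_gt fun hum => ?_⟩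
    obtain ⟨y, huy, hym⟩ := exists_between hum
    have hxu : x ≤ u := hu ⟨hpx, hxq⟩
    exact huy.not_ge
      (hu ⟨hpx.trans (toInf_strictMono (hxu.trans_lt huy)), toInf_strictMono hym⟩)

theorem IsOMinimalStructure.exists_isLUB [DenselyOrdered M] [NoMaxOrder M]
    (homin : IsOMinimalStructure L M) {S : Set M} (hS : (univ : Set M).Definable₁ L S)
    (hne : S.Nonempty) (hbdd : BddAbove S) : ∃ e, IsLUB S e := by
  obtain ⟨P, Iv, rfl⟩ := homin S hS
  exact (hasLUBOfBddAbove_finset P).union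
    (hasLUBOfBddAbove_biUnion Iv fun p _ => hasLUBOfBddAbove_toInf_Ioo p.1 p.2) hne hbdd

end OMinimal

section Definability

variable {L : Language} {M : Type*} [L.Structure M]

theorem definable₁_realize_snoc {n : ℕ} (a : Fin n → M) (φ : L.Formula (Fin (n + 1))) :
    (range a).Definable₁ L {x | φ.Realize (Fin.snoc a x)} := by
  refine Set.definable_iff_exists_formula_sum.2
    ⟨φ.relabel (Fin.snoc (fun i => Sum.inl ⟨a i, mem_range_self i⟩) (Sum.inr 0)), ?_⟩
  ext v
  simp only [mem_ofPred_eq, Formula.realize_relabel]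
  congr! 1
  ext i
  induction i using Fin.lastCases <;> simp

theorem definable₁_setOf_forall_mem {A : Set M} {R : M → M → Prop}
    (hR : A.Definable L {v : Fin 2 → M | R (v 0) (v 1)}) {S : Set M} (hS : A.Definable₁ L S) :
    A.Definable₁ L {x | ∀ y ∈ S, R y x} := by
  have h : A.Definable L
      {w : Fin 1 ⊕ Fin 1 → M | w (Sum.inr 0) ∈ S → R (w (Sum.inr 0)) (w (Sum.inl 0))} :=
    (hS.preimage_comp fun _ => Sum.inr 0).himp (hR.preimage_comp ![Sum.inr 0, Sum.inl 0])
  unfold Set.Definable₁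
  convert h.forall_of_finite using 1
  ext v
  simp [Fin.forall_fin_succ_pi]

variable [LinearOrder M]

theorem definable₁_setOf_isLUB {A : Set M} (hle : A.Definable L {v : Fin 2 → M | v 0 ≤ v 1})
    {S : Set M} (hS : A.Definable₁ L S) : A.Definable₁ L {x | IsLUB S x} := by
  have hub : A.Definable₁ L (upperBounds S) := definable₁_setOf_forall_mem hle hS
  have hlb : A.Definable₁ L (lowerBounds (upperBounds S)) :=
    definable₁_setOf_forall_mem (R := fun y x => x ≤ y) (hle.preimage_comp ![1, 0]) hub
  exact hub.inter hlb

end Definability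

section Indiscernibility

variable {L : Language} {M : Type*} [L.Structure M]

theorem SameTypeL.symm {n : ℕ} {v w : Fin n → M} (h : SameTypeL L v w) : SameTypeL L w v :=
  fun φ => (h φ).symm

theorem SameTypeL.comp {m n : ℕ} {v w : Fin n → M} (h : SameTypeL L v w) (f : Fin m → Fin n) :
    SameTypeL L (v ∘ f) (w ∘ f) :=
  fun φ => by simpa only [Formula.realize_relabel] using h (φ.relabel f)

variable [LinearOrder M] [DenselyOrdered M] [NoMaxOrder M]

theorem IsOMinimalStructure.exists_mem_dclSet_le (homin : IsOMinimalStructure L M) {A : Set M}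
    (hle : A.Definable L {v : Fin 2 → M | v 0 ≤ v 1}) {S : Set M} (hS : A.Definable₁ L S)
    (hbdd : BddAbove S) {x : M} (hx : x ∈ S) : ∃ e ∈ dclSet L A, x ≤ e := by
  obtain ⟨e, he⟩ := homin.exists_isLUB (hS.mono (subset_univ A)) ⟨x, hx⟩ hbdd
  have hlub : {y | IsLUB S y} = {e} :=
    Set.ext fun y => ⟨fun hy => hy.unique he, fun hy => hy ▸ he⟩
  exact ⟨e, show A.Definable₁ L {e} from hlub ▸ definable₁_setOf_isLUB hle hS, he.1 hx⟩

theorem IsOMinimalStructure.sameTypeL_snoc_of_lt (homin : IsOMinimalStructure L M) {A : Set M}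
    (hle : A.Definable L {v : Fin 2 → M | v 0 ≤ v 1}) {n : ℕ} {a : Fin n → M}
    (ha : range a ⊆ A) {z : M} (hz : ∀ w ∈ dclSet L A, w < z) {x y : M} (hx : z < x)
    (hy : z < y) : SameTypeL L (Fin.snoc a x) (Fin.snoc a y) := by
  have : Nonempty M := ⟨z⟩
  suffices key : ∀ φ : L.Formula (Fin (n + 1)), ∀ x y, z < x → z < y →
      φ.Realize (Fin.snoc a x) → φ.Realize (Fin.snoc a y) from
    fun φ => ⟨key φ x y hx hy, key φ y x hy hx⟩
  intro φ x y hx hy hxφ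
  by_contra hyφ
  have hS : A.Definable₁ L {t | φ.Realize (Fin.snoc a t)} :=
    (definable₁_realize_snoc a φ).mono ha
  have above_dcl :
      ∀ {T : Set M}, A.Definable₁ L T → BddAbove T → ∀ {t}, t ∈ T → z < t → False :=
    fun hT hbdd _ ht hzt =>
      let ⟨e, he, hte⟩ := homin.exists_mem_dclSet_le hle hT hbdd ht
      (hz e he).not_ge (hzt.le.trans hte)
  rcases homin.bddAbove_or_bddAbove_compl (hS.mono (subset_univ A)) with hbdd | hbdd
  · exact above_dcl hS hbdd hxφ hx
  · have hSc : A.Definable₁ L {t | φ.Realize (Fin.snoc a t)}ᶜ := hS.compl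
    exact above_dcl hSc hbdd hyφ hy

end Indiscernibility

section BackAndForth

variable {L : Language} {M : Type*} [L.Structure M]

theorem exists_equiv_of_sameTypeL_prefixes {u w : ℕ → M} (hu : Function.Surjective u)
    (hw : Function.Surjective w)
    (huw : ∀ n, SameTypeL L (fun i : Fin n => u i) (fun i : Fin n => w i)) :
    ∃ σ : M ≃[L] M, ∀ i, σ (u i) = w i := by
  have hcomp : ∀ {m} (idx : Fin m → ℕ), SameTypeL L (u ∘ idx) (w ∘ idx) := fun idx =>
    (huw (Finset.univ.sup idx + 1)).comp
      fun i => ⟨idx i, Nat.lt_succ_of_le (Finset.le_sup (Finset.mem_univ i))⟩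
  have hwu : ∀ i j, u i = u j → w i = w j := fun i j hij => by
    simpa using (hcomp ![i, j] ((Term.var 0).equal (Term.var 1))).1 (by simpa using hij)
  let F : M ↪ₑ[L] M :=
    ⟨w ∘ Function.surjInv hu, fun m φ t => by
      simpa only [← Function.comp_assoc, Function.comp_surjInv, Function.id_comp]
        using (hcomp (Function.surjInv hu ∘ t) φ).symm⟩
  have hF : ∀ i, F (u i) = w i := fun i => hwu _ _ (Function.surjInv_eq hu (u i))
  have hFsurj : Function.Surjective F := fun y =>
    let ⟨i, hi⟩ := hw y
    ⟨u i, (hF i).trans hi⟩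
  exact ⟨⟨Equiv.ofBijective F ⟨F.injective, hFsurj⟩, F.toEmbedding.map_fun',
    F.toEmbedding.map_rel'⟩, hF⟩

theorem SameTypeL.of_snoc {u w : ℕ → M} {n : ℕ}
    (h : SameTypeL L (Fin.snoc (fun i : Fin n => u i) (u n))
      (Fin.snoc (fun i : Fin n => w i) (w n))) :
    SameTypeL L (fun i : Fin (n + 1) => u i) (fun i : Fin (n + 1) => w i) := by
  have hsnoc :
      ∀ f : ℕ → M, Fin.snoc (fun i : Fin n => f i) (f n) = fun i : Fin (n + 1) => f i :=
    fun f => funext fun i => by induction i using Fin.lastCases <;> simp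
  rwa [hsnoc, hsnoc] at h

variable (hhom : OmegaHom L M) (e : ℕ → M) {k : ℕ} (v₀ w₀ : Fin k → M)

/- Positions `< k` copy `v₀, w₀`; afterwards step `k + 2m` puts `e m` into the domain and step
`k + 2m + 1` puts it into the range. The last branch is never taken (`backForthSeq_sameTypeL`). -/
open Classical in
noncomputable def backForthSeq (n : ℕ) : M × M :=
  if h : n < k then (v₀ ⟨n, h⟩, w₀ ⟨n, h⟩)
  else if hs : SameTypeL L (fun i : Fin n => (backForthSeq i).1)
      (fun i : Fin n => (backForthSeq i).2) then
    if Even (n - k) then (e ((n - k) / 2), (hhom n _ _ hs (e ((n - k) / 2))).choose)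
    else ((hhom n _ _ hs.symm (e ((n - k) / 2))).choose, e ((n - k) / 2))
  else (e 0, e 0)
termination_by n
decreasing_by all_goals exact i.isLt

theorem backForthSeq_of_lt {n : ℕ} (h : n < k) :
    backForthSeq hhom e v₀ w₀ n = (v₀ ⟨n, h⟩, w₀ ⟨n, h⟩) := by
  rw [backForthSeq, dif_pos h]

variable {v₀ w₀}

theorem backForthSeq_sameTypeL (h₀ : SameTypeL L v₀ w₀) (n : ℕ) :
    SameTypeL L (fun i : Fin n => (backForthSeq hhom e v₀ w₀ i).1)
      (fun i : Fin n => (backForthSeq hhom e v₀ w₀ i).2) := by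
  have initial : ∀ m ≤ k, SameTypeL L (fun i : Fin m => (backForthSeq hhom e v₀ w₀ i).1)
      (fun i : Fin m => (backForthSeq hhom e v₀ w₀ i).2) := fun m hm => by
    convert h₀.comp (Fin.castLE hm) using 1 <;>
      exact funext fun i => by rw [backForthSeq_of_lt hhom e v₀ w₀ (i.2.trans_le hm)]; rfl
  induction n with
  | zero => exact initial 0 k.zero_le
  | succ n ih =>
    by_cases hn : n < k
    · exact initial (n + 1) hn
    apply SameTypeL.of_snoc (u := fun j => (backForthSeq hhom e v₀ w₀ j).1)
      (w := fun j => (backForthSeq hhom e v₀ w₀ j).2)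
    rw [backForthSeq, dif_neg hn, dif_pos ih]
    split_ifs
    · exact (hhom n _ _ ih _).choose_spec
    · exact (hhom n _ _ ih.symm _).choose_spec.symm

end BackAndForth

theorem exists_equiv_of_sameTypeL {L : Language} {M : Type*} [L.Structure M] [Countable M]
    [Nonempty M] (hhom : OmegaHom L M) {k : ℕ} {v₀ w₀ : Fin k → M}
    (h₀ : SameTypeL L v₀ w₀) :
    ∃ σ : M ≃[L] M, ∀ i, σ (v₀ i) = w₀ i := by
  obtain ⟨e, he⟩ := exists_surjective_nat M
  have hseq := backForthSeq_sameTypeL hhom e h₀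
  have hforth : Function.Surjective fun n => (backForthSeq hhom e v₀ w₀ n).1 := fun x => by
    obtain ⟨m, rfl⟩ := he x
    refine ⟨k + 2 * m, ?_⟩
    dsimp only
    rw [backForthSeq, dif_neg (by omega), dif_pos (hseq _), if_pos (by simp)]
    simp
  have hback : Function.Surjective fun n => (backForthSeq hhom e v₀ w₀ n).2 := fun x => by
    obtain ⟨m, rfl⟩ := he x
    refine ⟨k + (2 * m + 1), ?_⟩
    dsimp only
    rw [backForthSeq, dif_neg (by omega), dif_pos (hseq _), if_neg (by simp)]
    simp [Nat.add_div_of_dvd_right]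
  obtain ⟨σ, hσ⟩ := exists_equiv_of_sameTypeL_prefixes hforth hback hseq
  exact ⟨σ, fun i => by simpa [backForthSeq_of_lt hhom e v₀ w₀ i.2] using hσ i⟩

theorem stmt_13 {L : Language} {M : Type*} [L.Structure M] [LinearOrder M] [DenselyOrdered M]
    (hle : (Set.univ : Set M).Definable L {v : Fin 2 → M | v 0 ≤ v 1})
    (homin : IsOMinimalStructure L M)
    (hcount : Countable M) (hhom : OmegaHom L M)
    (hdcl : ∀ (n : ℕ) (a : Fin n → M), ∃ z : M, ∀ w ∈ dclSet L (Set.range a), w < z)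
    (X : Set M)
    (hunb : ∀ x : M, ∃ y ∈ X, x < y)
    (hdisc : ∀ x ∈ X, ∃ u v : M, u < x ∧ x < v ∧ ∀ z ∈ X, u < z → z < v → z = x) :
    ∀ (n : ℕ) (a : Fin n → M),
      ∃ π : M ≃[L] M, (∀ i, π (a i) = a i) ∧ π '' X ≠ X := by
  intro n a
  have : Nonempty M := ⟨(hdcl 0 Fin.elim0).choose⟩
  have := hcount
  have : NoMaxOrder M := ⟨fun x => let ⟨y, _, hy⟩ := hunb x; ⟨y, hy⟩⟩
  obtain ⟨A₀, -, hA₀⟩ := Set.definable_iff_finitely_definable.1 hle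
  obtain ⟨z, hz⟩ := hdcl _ ((A₀ ∪ Finset.univ.image a).orderEmbOfFin rfl)
  rw [Finset.range_orderEmbOfFin, Finset.coe_union] at hz
  obtain ⟨b, hbX, hzb⟩ := hunb z
  obtain ⟨u, v, hub, hbv, hbX_isolated⟩ := hdisc b hbX
  obtain ⟨c, hbc, hcv⟩ := exists_between hbv
  have hcX : c ∉ X := fun hc => hbc.ne' (hbX_isolated c hc (hub.trans hbc) hcv)
  have hbc_type : SameTypeL L (Fin.snoc a b) (Fin.snoc a c) :=
    homin.sameTypeL_snoc_of_lt (hA₀.mono subset_union_left) (by simp) hz hzb (hzb.trans hbc)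
  obtain ⟨σ, hσ⟩ := exists_equiv_of_sameTypeL hhom hbc_type
  refine ⟨σ, fun i => by simpa using hσ i.castSucc, fun hσX => hcX ?_⟩
  rw [← hσX]
  exact ⟨b, hbX, by simpa using hσ (Fin.last n)⟩
end

section
/- Let K be a real closed field enumerated by a well-ordering, K = (x_ι | ι < κ) with x_0 = 1. Define by transfinite recursion an increasing sequence of divisible subgroups G_ι of the multiplicative group of positive elements: G_0 = {1}; at limits take unions; at successor step ι+1, set G_{ι+1} = G_ι if some element of G_ι is archimedean equivalent to x_ι (assuming x_ι > 0; otherwise to |x_ι|), and otherwise let G_{ι+1} be the subgroup generated by G_ι together with all rational powers of x_ι. Then G = ⋃_{ι<κ} G_ι is a divisible abelian subgroup of (K^{>0}, ·) intersecting each archimedean equivalence class of K^{>0} in exactly one element, i.e. G is a value group section of K. Moreover this construction uses no choice (only transfinite recursion along the given well-ordering). -/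
open FirstOrder Language FirstOrder.Ring

/-- A linearly ordered field is real closed. -/
def IsRealClosed' (K : Type*) [Field K] [LinearOrder K] [IsStrictOrderedRing K] : Prop :=
  (∀ x : K, 0 ≤ x → ∃ y : K, y ^ 2 = x) ∧
    ∀ p : Polynomial K, Odd p.natDegree → ∃ x : K, p.eval x = 0

open scoped Classical in
/-- The transfinite recursion of Lemma 7.1: given an enumeration `x` of `K`, `Gseq K x ι` is
the subgroup `G_ι` of the multiplicative group of positive elements of `K`: `G_0 = {1}`,
unions at limits, and at successor stage `ι + 1` either nothing is added (when `|x ι|` is zero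
or already archimedean equivalent to an element of `G_ι`), or all rational powers of `|x ι|`
(i.e. all positive `z` with `z ^ n = |x ι| ^ m` for some `m : ℤ` and `0 < n : ℕ`) are added. -/
noncomputable def Gseq (K : Type*) [Field K] [LinearOrder K] [IsStrictOrderedRing K] (x : Ordinal → K) :
    Ordinal → Subgroup {y : K // 0 < y} := fun o =>
  Ordinal.limitRecOn o
    ⊥
    (fun α Gα =>
      if (x α = 0) ∨ ∃ g ∈ Gα, ArchEquiv K |x α| (g : K) then Gα
      else Gα ⊔ Subgroup.closure
        {z : {y : K // 0 < y} | ∃ (m : ℤ) (nn : ℕ), 0 < nn ∧ (z : K) ^ nn = |x α| ^ m})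
    (fun o _ ih => ⨆ o' : Set.Iio o, ih o' o'.2)

/-!
Let `U` be the subgroup of positive elements archimedean equivalent to `1`. A value group section
is a divisible subgroup `G` with `G ⊓ U = ⊥` and `G ⊔ U = ⊤`, and `Gseq` keeps the first two
properties at every stage. At a successor step where `b = |x ι|` is new, i.e. `b ∉ G ⊔ U`, an
element `a * s` with `a ∈ G` and `s ^ n = b ^ m` that lies in `U` forces `m = 0` (and then
`a * s = 1`): otherwise, writing `(a ^ n)⁻¹ = h ^ m` with `h ∈ G` by divisibility, we get
`(b * h⁻¹) ^ m ∈ U`, hence `b * h⁻¹ ∈ U` because `U` is isolated, hence `b ∈ G ⊔ U`.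
Finally every positive `y` lies in `G ⊔ U` because it, or `2 * y`, is enumerated at a stage `ι`
with `ι + 1 < κ`.
-/

theorem eq_zero_of_nsmul_eq_zero {M : Type*} [AddCommMonoid M] [LinearOrder M]
    [IsOrderedAddMonoid M] {a : M} {n : ℕ} (hn : n ≠ 0) (h : n • a = 0) : a = 0 := by
  rcases le_total 0 a with ha | ha
  · exact le_antisymm (h ▸ le_self_nsmul ha hn) ha
  · refine le_antisymm ha ?_
    simpa [h] using nsmul_le_nsmul_left_of_nonpos ha (Nat.one_le_iff_ne_zero.2 hn)

namespace Subgroup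

variable {G : Type*} [CommGroup G]

def IsDivisible (H : Subgroup G) : Prop :=
  ∀ g ∈ H, ∀ n : ℕ, 0 < n → ∃ h ∈ H, h ^ n = g

theorem isDivisible_bot : (⊥ : Subgroup G).IsDivisible := by
  rintro g hg n -
  exact ⟨1, one_mem _, by rw [one_pow, mem_bot.1 hg]⟩

theorem IsDivisible.sup {H H' : Subgroup G} (hH : H.IsDivisible) (hH' : H'.IsDivisible) :
    (H ⊔ H').IsDivisible := by
  intro g hg n hn
  obtain ⟨a, ha, b, hb, rfl⟩ := mem_sup.1 hg
  obtain ⟨a', ha', rfl⟩ := hH a ha n hn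
  obtain ⟨b', hb', rfl⟩ := hH' b hb n hn
  exact ⟨a' * b', mul_mem_sup ha' hb', mul_pow a' b' n⟩

theorem IsDivisible.iSup {ι : Type*} {H : ι → Subgroup G} (hdir : Directed (· ≤ ·) H)
    (hH : ∀ i, (H i).IsDivisible) : (⨆ i, H i).IsDivisible := by
  rcases isEmpty_or_nonempty ι with hι | hι
  · rw [iSup_of_empty]
    exact isDivisible_bot
  intro g hg n hn
  obtain ⟨i, hi⟩ := (mem_iSup_of_directed hdir).1 hg
  obtain ⟨h, hh, rfl⟩ := hH i g hi n hn
  exact ⟨h, mem_iSup_of_mem i hh, rfl⟩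

theorem IsDivisible.exists_zpow_eq {H : Subgroup G} (hH : H.IsDivisible) {g : G} (hg : g ∈ H)
    {m : ℤ} (hm : m ≠ 0) : ∃ h ∈ H, h ^ m = g := by
  obtain ⟨h, hh, hhg⟩ := hH g hg m.natAbs (Int.natAbs_pos.2 hm)
  rcases Int.natAbs_eq m with hm' | hm'
  · exact ⟨h, hh, by rw [hm', zpow_natCast, hhg]⟩
  · exact ⟨h⁻¹, inv_mem hh, by rw [hm', inv_zpow', neg_neg, zpow_natCast, hhg]⟩

theorem disjoint_iSup_of_directed {ι : Type*} {H : ι → Subgroup G} (hdir : Directed (· ≤ ·) H)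
    {U : Subgroup G} (hU : ∀ i, Disjoint (H i) U) : Disjoint (⨆ i, H i) U := by
  rcases isEmpty_or_nonempty ι with hι | hι
  · rw [iSup_of_empty]
    exact disjoint_bot_left
  refine disjoint_def.2 fun hg hgU => ?_
  obtain ⟨i, hi⟩ := (mem_iSup_of_directed hdir).1 hg
  exact disjoint_def.1 (hU i) hi hgU

theorem existsUnique_mul_inv_mem_of_disjoint {H U : Subgroup G} (hHU : Disjoint H U) {b : G}
    (hb : b ∈ H ⊔ U) : ∃! h, h ∈ H ∧ b * h⁻¹ ∈ U := by
  obtain ⟨h, hh, u, hu, rfl⟩ := mem_sup.1 hb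
  refine ⟨h, ⟨hh, by rwa [mul_comm h, mul_inv_cancel_right]⟩, ?_⟩
  rintro h' ⟨hh', hu'⟩
  have hquot : h * h'⁻¹ ∈ U := by
    simpa only [mul_right_comm (h * u) h'⁻¹, mul_inv_cancel_right] using mul_mem hu' (inv_mem hu)
  exact (mul_inv_eq_one.1 (disjoint_def.1 hHU (mul_mem hh (inv_mem hh')) hquot)).symm

def ratPowers (b : G) : Subgroup G where
  carrier := {z | ∃ (m : ℤ) (n : ℕ), 0 < n ∧ z ^ n = b ^ m}
  one_mem' := ⟨0, 1, one_pos, by simp⟩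
  mul_mem' := by
    rintro z w ⟨m, n, hn, hz⟩ ⟨m', n', hn', hw⟩
    refine ⟨m * n' + m' * n, n * n', Nat.mul_pos hn hn', ?_⟩
    rw [mul_pow, pow_mul, hz, mul_comm n n', pow_mul, hw, zpow_add, zpow_mul, zpow_mul,
      zpow_natCast, zpow_natCast]
  inv_mem' := by
    rintro z ⟨m, n, hn, hz⟩
    exact ⟨-m, n, hn, by rw [inv_pow, hz, zpow_neg]⟩

theorem mem_ratPowers {b z : G} : z ∈ ratPowers b ↔ ∃ (m : ℤ) (n : ℕ), 0 < n ∧ z ^ n = b ^ m :=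
  Iff.rfl

theorem ratPowers_isDivisible (hroot : ∀ g : G, ∀ n : ℕ, 0 < n → ∃ h : G, h ^ n = g) (b : G) :
    (ratPowers b).IsDivisible := by
  rintro s ⟨m, k, hk, hs⟩ n hn
  obtain ⟨w, rfl⟩ := hroot s n hn
  exact ⟨w, ⟨m, n * k, Nat.mul_pos hn hk, by rw [pow_mul, hs]⟩, rfl⟩

theorem mem_of_zpow_mem {U : Subgroup G} (hU : ∀ u : G, ∀ n : ℕ, n ≠ 0 → u ^ n ∈ U → u ∈ U)
    {u : G} {m : ℤ} (hm : m ≠ 0) (h : u ^ m ∈ U) : u ∈ U := by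
  refine hU u m.natAbs (Int.natAbs_ne_zero.2 hm) ?_
  rcases Int.natAbs_eq m with hm' | hm'
  · rwa [hm', zpow_natCast] at h
  · rwa [hm', zpow_neg, inv_mem_iff, zpow_natCast] at h

theorem disjoint_sup_ratPowers [IsMulTorsionFree G] {H U : Subgroup G}
    (hU : ∀ u : G, ∀ n : ℕ, n ≠ 0 → u ^ n ∈ U → u ∈ U) (hH : H.IsDivisible)
    (hHU : Disjoint H U) {b : G} (hb : b ∉ H ⊔ U) : Disjoint (H ⊔ ratPowers b) U := by
  refine disjoint_def.2 fun {g} hg hgU => ?_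
  obtain ⟨a, ha, s, ⟨m, n, hn, hs⟩, rfl⟩ := mem_sup.1 hg
  rcases eq_or_ne m 0 with rfl | hm
  · rw [zpow_zero, pow_eq_one_iff_left hn.ne'] at hs
    rw [hs, mul_one] at hgU ⊢
    exact disjoint_def.1 hHU ha hgU
  · obtain ⟨h, hh, hhm⟩ := hH.exists_zpow_eq (inv_mem (pow_mem ha n)) hm
    have hbh : (b * h⁻¹) ^ m ∈ U := by
      rw [mul_zpow, inv_zpow, hhm, inv_inv, ← hs, mul_comm, ← mul_pow]
      exact pow_mem hgU n
    refine absurd (mem_sup.2 ⟨h, hh, b * h⁻¹, mem_of_zpow_mem hU hm hbh, ?_⟩) hb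
    rw [mul_comm, inv_mul_cancel_right]

end Subgroup

open Subgroup

section ArchimedeanClass

variable {K : Type*} [Field K] [LinearOrder K] [IsStrictOrderedRing K]

theorem IsRealClosed'.exists_pos_pow_eq (hK : IsRealClosed' K) {n : ℕ} (hn : n ≠ 0) {z : K}
    (hz : 0 < z) : ∃ w : K, 0 < w ∧ w ^ n = z := by
  induction n using Nat.strong_induction_on generalizing z with
  | _ n ih =>
    rcases Nat.even_or_odd' n with ⟨k, rfl | rfl⟩
    · obtain ⟨w, hw, rfl⟩ := ih k (by omega) (by omega) hz
      obtain ⟨y, rfl⟩ := hK.1 w hw.le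
      have hy : y ≠ 0 := by rintro rfl; simp at hw
      exact ⟨|y|, abs_pos.2 hy, by rw [pow_mul, sq_abs]⟩
    · have hodd : Odd (Polynomial.X ^ (2 * k + 1) - Polynomial.C z).natDegree := by
        rw [Polynomial.natDegree_X_pow_sub_C]
        exact odd_two_mul_add_one k
      obtain ⟨y, hy⟩ := hK.2 _ hodd
      simp only [Polynomial.eval_sub, Polynomial.eval_pow, Polynomial.eval_X,
        Polynomial.eval_C, sub_eq_zero] at hy
      exact ⟨y, (odd_two_mul_add_one k).pow_pos_iff.1 (hy ▸ hz), hy⟩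

theorem archEquiv_iff_mk_eq {u v : K} (hu : 0 < u) (hv : 0 < v) :
    ArchEquiv K u v ↔ ArchimedeanClass.mk u = ArchimedeanClass.mk v := by
  simp only [ArchimedeanClass.mk_eq_mk, abs_of_pos hu, abs_of_pos hv, nsmul_eq_mul]
  constructor
  · rintro ⟨n, hu', hv'⟩
    exact ⟨⟨n, hv'.le⟩, ⟨n, hu'.le⟩⟩
  · rintro ⟨⟨m, hm⟩, ⟨n, hn⟩⟩
    refine ⟨m + n + 1, ?_, ?_⟩ <;> push_cast <;> nlinarith

variable (K) in
def archUnits : Subgroup {y : K // 0 < y} where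
  carrier := {u | ArchimedeanClass.mk (u : K) = 0}
  one_mem' := ArchimedeanClass.mk_one
  mul_mem' {u v} (hu : ArchimedeanClass.mk (u : K) = 0) (hv : ArchimedeanClass.mk (v : K) = 0) :=
    show ArchimedeanClass.mk ((u : K) * v) = 0 by rw [ArchimedeanClass.mk_mul, hu, hv, add_zero]
  inv_mem' {u} (hu : ArchimedeanClass.mk (u : K) = 0) :=
    show ArchimedeanClass.mk (u : K)⁻¹ = 0 by rw [ArchimedeanClass.mk_inv, hu, neg_zero]

theorem mem_archUnits {u : {y : K // 0 < y}} : u ∈ archUnits K ↔ ArchimedeanClass.mk (u : K) = 0 :=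
  Iff.rfl

theorem mem_archUnits_of_pow_mem (u : {y : K // 0 < y}) (n : ℕ) (hn : n ≠ 0)
    (h : u ^ n ∈ archUnits K) : u ∈ archUnits K := by
  rw [mem_archUnits, Positive.val_pow, ArchimedeanClass.mk_pow] at h
  exact eq_zero_of_nsmul_eq_zero hn h

theorem archEquiv_iff_mul_inv_mem_archUnits {u v : {y : K // 0 < y}} :
    ArchEquiv K u v ↔ u * v⁻¹ ∈ archUnits K := by
  rw [archEquiv_iff_mk_eq u.2 v.2, mem_archUnits, Positive.val_mul, Positive.coe_inv,
    ← div_eq_mul_inv, ArchimedeanClass.mk_div,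
    LinearOrderedAddCommGroupWithTop.sub_eq_zero (ArchimedeanClass.mk_eq_top_iff.not.2 v.2.ne')]

theorem exists_archEquiv_iff_mem_sup_archUnits {H : Subgroup {y : K // 0 < y}}
    {b : {y : K // 0 < y}} : (∃ g ∈ H, ArchEquiv K b g) ↔ b ∈ H ⊔ archUnits K := by
  simp_rw [archEquiv_iff_mul_inv_mem_archUnits, mem_sup]
  constructor
  · rintro ⟨g, hg, hu⟩
    exact ⟨g, hg, _, hu, by rw [mul_comm b, mul_inv_cancel_left]⟩
  · rintro ⟨g, hg, u, hu, rfl⟩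
    exact ⟨g, hg, by rwa [mul_comm g, mul_inv_cancel_right]⟩

end ArchimedeanClass

section Gseq

variable {K : Type*} [Field K] [LinearOrder K] [IsStrictOrderedRing K] (x : Ordinal → K)

theorem Gseq_zero : Gseq K x 0 = ⊥ := by
  rw [Gseq, Ordinal.limitRecOn_zero]

open scoped Classical in
theorem Gseq_add_one (α : Ordinal) :
    Gseq K x (α + 1) =
      if (x α = 0) ∨ ∃ g ∈ Gseq K x α, ArchEquiv K |x α| (g : K) then Gseq K x α
      else Gseq K x α ⊔ Subgroup.closure
        {z : {y : K // 0 < y} | ∃ (m : ℤ) (nn : ℕ), 0 < nn ∧ (z : K) ^ nn = |x α| ^ m} := by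
  rw [Gseq, Ordinal.limitRecOn_add_one]
  rfl

theorem Gseq_limit {o : Ordinal} (ho : Order.IsSuccLimit o) :
    Gseq K x o = ⨆ ι : Set.Iio o, Gseq K x ι := by
  rw [Gseq, Ordinal.limitRecOn_limit _ _ _ _ ho]
  rfl

theorem Gseq_add_one_eq_or (α : Ordinal) :
    Gseq K x (α + 1) = Gseq K x α ∨ ∃ b, b ∉ Gseq K x α ⊔ archUnits K ∧
      Gseq K x (α + 1) = Gseq K x α ⊔ ratPowers b := by
  rw [Gseq_add_one]
  split_ifs with h
  · exact .inl rfl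
  · simp only [not_or, not_exists, not_and] at h
    obtain ⟨hx, hnew⟩ := h
    let b : {y : K // 0 < y} := ⟨|x α|, abs_pos.2 hx⟩
    have hclosure : {z : {y : K // 0 < y} | ∃ (m : ℤ) (nn : ℕ), 0 < nn ∧ (z : K) ^ nn = |x α| ^ m}
        = ratPowers b := by
      ext z
      simp only [Set.mem_ofPred_eq, SetLike.mem_coe, mem_ratPowers, Subtype.ext_iff,
        Positive.val_pow, Positive.coe_zpow, b]
    refine .inr ⟨b, fun hb => ?_, by rw [hclosure, closure_eq]⟩
    obtain ⟨g, hg, hgb⟩ := exists_archEquiv_iff_mem_sup_archUnits.2 hb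
    exact hnew g hg hgb

theorem mem_Gseq_add_one_sup_archUnits {α : Ordinal} (hx : 0 < x α) :
    ⟨x α, hx⟩ ∈ Gseq K x (α + 1) ⊔ archUnits K := by
  rw [Gseq_add_one]
  split_ifs with h
  · obtain ⟨g, hg, hgx⟩ := h.resolve_left hx.ne'
    rw [abs_of_pos hx] at hgx
    exact exists_archEquiv_iff_mem_sup_archUnits.1 ⟨g, hg, hgx⟩
  · exact mem_sup_left (mem_sup_right (subset_closure ⟨1, 1, one_pos, by simp [abs_of_pos hx]⟩))

theorem Gseq_mono : Monotone (Gseq K x) := by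
  intro α β hαβ
  induction β using Ordinal.limitRecOn with
  | zero => rw [nonpos_iff_eq_zero.1 hαβ]
  | add_one β ih =>
    rcases hαβ.eq_or_lt with rfl | h
    · rfl
    · refine (ih (Order.lt_add_one_iff.1 h)).trans ?_
      rcases Gseq_add_one_eq_or x β with h' | ⟨b, -, h'⟩ <;> rw [h']
      exact le_sup_left
  | limit o ho ih =>
    rcases hαβ.eq_or_lt with rfl | h
    · rfl
    · rw [Gseq_limit x ho]
      exact le_iSup (fun ι : Set.Iio o => Gseq K x ι) ⟨α, h⟩

theorem directed_Gseq_Iio (o : Ordinal) : Directed (· ≤ ·) fun ι : Set.Iio o => Gseq K x ι :=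
  ((Gseq_mono x).comp (Subtype.mono_coe _)).directed_le

theorem isDivisible_iSup_Gseq_Iio {o : Ordinal} (h : ∀ ι < o, (Gseq K x ι).IsDivisible) :
    (⨆ ι : Set.Iio o, Gseq K x ι).IsDivisible :=
  IsDivisible.iSup (directed_Gseq_Iio x o) fun ι => h ι ι.2

theorem disjoint_iSup_Gseq_Iio {o : Ordinal} (h : ∀ ι < o, Disjoint (Gseq K x ι) (archUnits K)) :
    Disjoint (⨆ ι : Set.Iio o, Gseq K x ι) (archUnits K) :=
  disjoint_iSup_of_directed (directed_Gseq_Iio x o) fun ι => h ι ι.2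

theorem Gseq_isDivisible_and_disjoint (hK : IsRealClosed' K) (o : Ordinal) :
    (Gseq K x o).IsDivisible ∧ Disjoint (Gseq K x o) (archUnits K) := by
  have hroot (z : {y : K // 0 < y}) (n : ℕ) (hn : 0 < n) : ∃ w, w ^ n = z := by
    obtain ⟨w, hw, hwz⟩ := hK.exists_pos_pow_eq hn.ne' z.2
    exact ⟨⟨w, hw⟩, Subtype.ext hwz⟩
  induction o using Ordinal.limitRecOn with
  | zero => exact Gseq_zero x ▸ ⟨isDivisible_bot, disjoint_bot_left⟩
  | add_one α ih =>
    rcases Gseq_add_one_eq_or x α with h | ⟨b, hb, h⟩ <;> rw [h]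
    · exact ih
    · exact ⟨ih.1.sup (ratPowers_isDivisible hroot b),
        disjoint_sup_ratPowers mem_archUnits_of_pow_mem ih.1 ih.2 hb⟩
  | limit o ho ih =>
    rw [Gseq_limit x ho]
    exact ⟨isDivisible_iSup_Gseq_Iio x fun ι hι => (ih ι hι).1,
      disjoint_iSup_Gseq_Iio x fun ι hι => (ih ι hι).2⟩

theorem mem_iSup_Gseq_sup_archUnits {κ : Ordinal} (hsurj : ∀ y : K, ∃ ι < κ, x ι = y)
    {y : K} (hy : 0 < y) : ⟨y, hy⟩ ∈ (⨆ ι : Set.Iio κ, Gseq K x ι) ⊔ archUnits K := by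
  have hstage {α : Ordinal} (hα : α + 1 < κ) (hx : 0 < x α) :
      ⟨x α, hx⟩ ∈ (⨆ ι : Set.Iio κ, Gseq K x ι) ⊔ archUnits K :=
    sup_le_sup_right (le_iSup (fun ι : Set.Iio κ => Gseq K x ι) ⟨α + 1, hα⟩) _
      (mem_Gseq_add_one_sup_archUnits x hx)
  obtain ⟨i, hi, hxi⟩ := hsurj y
  obtain ⟨j, hj, hxj⟩ := hsurj (2 * y)
  have hij : i ≠ j := by
    rintro rfl
    linarith [hxi.symm.trans hxj]
  rcases hij.lt_or_gt with hij | hji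
  · subst hxi
    exact hstage ((Order.add_one_le_of_lt hij).trans_lt hj) hy
  · have htwo : (⟨2, two_pos⟩ : {y : K // 0 < y}) ∈ archUnits K := ArchimedeanClass.mk_ofNat
    have h2y := hstage ((Order.add_one_le_of_lt hji).trans_lt hi) (hxj ▸ by positivity)
    convert mul_mem h2y (mem_sup_right (inv_mem htwo)) using 1
    ext
    simp only [Positive.val_mul, Positive.coe_inv, hxj]
    field_simp

end Gseq

theorem stmt_16_general {K : Type*} [Field K] [LinearOrder K] [IsStrictOrderedRing K] (hK : IsRealClosed' K)
    (κ : Ordinal) (x : Ordinal → K)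
    (hsurj : ∀ y : K, ∃ ι < κ, x ι = y) :
    ∀ G : Subgroup {y : K // 0 < y}, G = ⨆ ι ∈ Set.Iio κ, Gseq K x ι →
      -- `G` is a divisible (abelian) subgroup of the positive multiplicative group of `K` ...
      (∀ g ∈ G, ∀ n : ℕ, 0 < n → ∃ h ∈ G, h ^ n = g) ∧
      -- ... meeting each archimedean equivalence class in exactly one element,
      -- i.e. `G` is a value group section of `K`.
      (∀ y : K, 0 < y → ∃! g : {z : K // 0 < z}, g ∈ G ∧ ArchEquiv K y (g : K)) := by
  rintro G rfl
  rw [← iSup_subtype'']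
  have hstages (ι : Ordinal) :
      (Gseq K x ι).IsDivisible ∧ Disjoint (Gseq K x ι) (archUnits K) :=
    Gseq_isDivisible_and_disjoint x hK ι
  refine ⟨isDivisible_iSup_Gseq_Iio x fun ι _ => (hstages ι).1, fun y hy => ?_⟩
  refine (existsUnique_congr fun g =>
    and_congr_right' (archEquiv_iff_mul_inv_mem_archUnits (u := ⟨y, hy⟩))).2 ?_
  exact existsUnique_mul_inv_mem_of_disjoint
    (disjoint_iSup_Gseq_Iio x fun ι _ => (hstages ι).2) (mem_iSup_Gseq_sup_archUnits x hsurj hy)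

theorem stmt_16 {K : Type*} [Field K] [LinearOrder K] [IsStrictOrderedRing K] (hK : IsRealClosed' K)
    (κ : Ordinal) (x : Ordinal → K) (hx0 : x 0 = 1)
    (hsurj : ∀ y : K, ∃ ι < κ, x ι = y) :
    ∀ G : Subgroup {y : K // 0 < y}, G = ⨆ ι ∈ Set.Iio κ, Gseq K x ι →
      -- `G` is a divisible (abelian) subgroup of the positive multiplicative group of `K` ...
      (∀ g ∈ G, ∀ n : ℕ, 0 < n → ∃ h ∈ G, h ^ n = g) ∧
      -- ... meeting each archimedean equivalence class in exactly one element,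
      -- i.e. `G` is a value group section of `K`.
      (∀ y : K, 0 < y → ∃! g : {z : K // 0 < z}, g ∈ G ∧ ArchEquiv K y (g : K)) :=
  stmt_16_general hK κ x hsurj
end
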